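/- arXiv:2110.12395 — 2 statements merged into one kernel-verified Lean document; each statement's English description precedes it below -/
import Mathlib

section
/- Let K be a rationally additive semiring and let (α_{i,j})_{(i,j)∈I×J} be a countable doubly-indexed family of elements of K such that α_{i,J} = Σ_{j∈J} α_{i,j} exists for all i ∈ I, and α_{I,j} = Σ_{i∈I} α_{i,j} exists for all j ∈ J. Then Σ_{i∈I} α_{i,J} exists if and only if Σ_{j∈J} α_{I,j} exists, and when these sums exist they are equal. -/
/-- A *rationally additive semiring* is a semiring `K` equipped with a partial operator
assigning to some (countable) families `(f i)_{i ∈ I}` a sum `sum f ∈ K` (`Option`-valued: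
`some s` means the sum exists and equals `s`, `none` means the family is not summable),
satisfying axioms (Ax1)–(Ax5) of Ésik and Kuich. Disjoint countable partitions of the index
set `I` are represented by a map `p : I → J` whose fibres are the blocks. -/
structure RatAdd (K : Type) [Semiring K] : Type 1 where
  /-- the partial countable-sum operator -/
  sum : {I : Type} → (I → K) → Option K
  /-- (Ax1) every finite family is summable, with the usual finite sum as its sum -/
  ax1 : ∀ {I : Type} [Fintype I] (f : I → K), sum f = some (∑ i, f i)
  /-- (Ax2) geometric families are summable -/
  ax2 : ∀ α : K, (sum fun n : ℕ => α ^ n).isSome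
  /-- (Ax3, left) products distribute on the left over existing sums -/
  ax3l : ∀ {I : Type} [Countable I] (f : I → K) (s β : K),
    sum f = some s → sum (fun i => β * f i) = some (β * s)
  /-- (Ax3, right) products distribute on the right over existing sums -/
  ax3r : ∀ {I : Type} [Countable I] (f : I → K) (s β : K),
    sum f = some s → sum (fun i => f i * β) = some (s * β)
  /-- (Ax4) if each block of a countable partition is summable with sum `r j`, and the
  family of the `r j` is summable with sum `s`, then the whole family is summable with sum `s` -/
  ax4 : ∀ {I J : Type} [Countable I] [Countable J] (p : I → J) (f : I → K) (r : J → K),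
    (∀ j : J, sum (fun i : {i : I // p i = j} => f i.val) = some (r j)) →
    ∀ s : K, sum r = some s → sum f = some s
  /-- (Ax5) if the whole family is summable with sum `s`, and each block of a countable
  partition is summable with sum `r j`, then the family of the `r j` is summable with sum `s` -/
  ax5 : ∀ {I J : Type} [Countable I] [Countable J] (p : I → J) (f : I → K) (r : J → K),
    (∀ j : J, sum (fun i : {i : I // p i = j} => f i.val) = some (r j)) →
    ∀ s : K, sum f = some s → sum r = some s


/-- Reindexing a summable family along a bijection preserves summability and the sum. -/
lemma RatAdd.reindex {K : Type} [Semiring K] (R : RatAdd K) {I I' : Type}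
    [Countable I] [Countable I'] (e : I' ≃ I) (f : I → K) (s : K)
    (h : R.sum f = some s) : R.sum (fun i' => f (e i')) = some s := by
  refine R.ax4 (p := (e : I' → I)) (fun i' => f (e i')) f ?_ s h
  intro j
  haveI : Unique {i' : I' // e i' = j} :=
    ⟨⟨⟨e.symm j, e.apply_symm_apply j⟩⟩, fun a =>
      Subtype.ext (e.injective (a.prop.trans (e.apply_symm_apply j).symm))⟩
  rw [R.ax1, Fintype.sum_unique]
  exact congrArg (fun t => some (f t)) (Subtype.prop (default : {i' : I' // e i' = j}))

/-- Let `(α i j)` be a countable doubly-indexed family in a rationally additive semiring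
such that every row sum `Σ_j α i j` exists and every column sum `Σ_i α i j` exists. Then
the sum of the row sums exists if and only if the sum of the column sums exists, and when
these sums exist they are equal. -/
theorem ratAdd_sum_swap (K : Type) [Semiring K] (R : RatAdd K)
    (I J : Type) [Countable I] [Countable J]
    (α : I → J → K) (rowSum : I → K) (colSum : J → K)
    (hrow : ∀ i : I, R.sum (fun j => α i j) = some (rowSum i))
    (hcol : ∀ j : J, R.sum (fun i => α i j) = some (colSum j)) :
    ((R.sum rowSum).isSome ↔ (R.sum colSum).isSome) ∧
      ∀ s : K, R.sum rowSum = some s → R.sum colSum = some s := by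
  set F : I × J → K := fun x => α x.1 x.2 with hF
  have blockRow : ∀ i : I,
      R.sum (fun x : {x : I × J // x.1 = i} => F x.val) = some (rowSum i) := by
    intro i
    let e : {x : I × J // x.1 = i} ≃ J :=
      { toFun := fun x => x.val.2
        invFun := fun j => ⟨(i, j), rfl⟩
        left_inv := fun x => by
          apply Subtype.ext
          exact Prod.ext x.prop.symm rfl
        right_inv := fun j => rfl }
    have h2 := R.reindex e (fun j => α i j) (rowSum i) (hrow i)
    have heq : (fun x : {x : I × J // x.1 = i} => F x.val)
        = (fun x : {x : I × J // x.1 = i} => α i (e x)) := by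
      funext x
      simp only [F, e, Equiv.coe_fn_mk]
      rw [x.prop]
    rw [heq]; exact h2
  have blockCol : ∀ j : J,
      R.sum (fun x : {x : I × J // x.2 = j} => F x.val) = some (colSum j) := by
    intro j
    let e : {x : I × J // x.2 = j} ≃ I :=
      { toFun := fun x => x.val.1
        invFun := fun i => ⟨(i, j), rfl⟩
        left_inv := fun x => by
          apply Subtype.ext
          exact Prod.ext rfl x.prop.symm
        right_inv := fun i => rfl }
    have h2 := R.reindex e (fun i => α i j) (colSum j) (hcol j)
    have heq : (fun x : {x : I × J // x.2 = j} => F x.val)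
        = (fun x : {x : I × J // x.2 = j} => α (e x) j) := by
      funext x
      simp only [F, e, Equiv.coe_fn_mk]
      rw [x.prop]
    rw [heq]; exact h2
  have fwd : ∀ s : K, R.sum rowSum = some s → R.sum colSum = some s := by
    intro s hs
    have hF1 : R.sum F = some s := R.ax4 Prod.fst F rowSum blockRow s hs
    exact R.ax5 Prod.snd F colSum blockCol s hF1
  have bwd : ∀ s : K, R.sum colSum = some s → R.sum rowSum = some s := by
    intro s hs
    have hF1 : R.sum F = some s := R.ax4 Prod.snd F colSum blockCol s hs
    exact R.ax5 Prod.fst F rowSum blockRow s hF1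
  refine ⟨⟨fun h => ?_, fun h => ?_⟩, fwd⟩
  · obtain ⟨s, hs⟩ := Option.isSome_iff_exists.mp h
    rw [fwd s hs]; rfl
  · obtain ⟨s, hs⟩ := Option.isSome_iff_exists.mp h
    rw [bwd s hs]; rfl
end

section
/- Let K be a rationally additive semiring and M a pre-rational monoid. Then every K-automaton A over M is valid: for every m ∈ M, the sum ⟦A⟧(m) = Σ_{w} π_A(w), over all accepting runs w of A whose label is m, exists in K. -/
/-!
The accepting runs of `A` labelled `m` form a regular language over the alphabet `Δ`: the
preimage of `m` under the labelling morphism is regular by pre-rationality, and the accepting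
runs are recognised by a DFA that remembers the last transition read. So it suffices that, for
any regular language over a finite alphabet, the products of letter weights along its words
form a summable family.

For a DFA this is the McNaughton–Yamada construction, by induction on the set `S` of states a
path may visit strictly inside. A path from `p` to `q` through `insert x S` either avoids `x`
inside, or splits uniquely at its first inner visit to `x` into a path `p → x` through `S`
followed by a path `x → q` through `insert x S`; iterating the split at `x` writes the latter
uniquely as a list of loops `x → x` through `S` followed by a path `x → q` through `S`. These
bijections reduce the sum to finite sums (Ax1), products of sums (Ax3, Ax4) and, for the lists
of loops, a geometric series (Ax2); along a bijection, (Ax4) and (Ax5) with singleton blocks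
transport sums in both directions.
-/

/-- A monoid `M` is *pre-rational* if for every finite alphabet `A`, every monoid
homomorphism `μ` from the free monoid `A*` to `M`, and every `m ∈ M`, the language
`μ⁻¹(m) ⊆ A*` is regular. -/
def IsPreRational (M : Type*) [Monoid M] : Prop :=
  ∀ (A : Type) (_ : Fintype A) (μ : FreeMonoid A →* M) (m : M),
    Language.IsRegular {w : List A | μ (FreeMonoid.ofList w) = m}
/-- A `K`-automaton over the monoid `M`: a finite set of states `Q`, sets `init` and `final`
of initial and final states, and a finite set `Δ ⊆ Q × M × K × Q` of transitions, each
carrying a label in `M` and a weight in `K`. -/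
structure WAut (M K : Type) : Type 1 where
  /-- the type of states -/
  Q : Type
  /-- there are finitely many states -/
  finQ : Fintype Q
  /-- the initial states -/
  init : Set Q
  /-- the final states -/
  final : Set Q
  /-- the transitions: source state, label, weight, target state -/
  Δ : Set (Q × M × K × Q)
  /-- there are finitely many transitions -/
  finΔ : Δ.Finite

namespace WAut

variable {M K : Type} [Monoid M] [Semiring K]

/-- A run is a finite sequence of transitions with matching consecutive states. -/
def IsRun (A : WAut M K) (r : List ↥A.Δ) : Prop :=
  List.Chain' (fun x y : ↥A.Δ => x.val.2.2.2 = y.val.1) r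

/-- An accepting run: a (nonempty) run starting in an initial state and ending
in a final state. -/
def IsAccepting (A : WAut M K) (r : List ↥A.Δ) : Prop :=
  A.IsRun r ∧ ∃ h : r ≠ [], (r.head h).val.1 ∈ A.init ∧ (r.getLast h).val.2.2.2 ∈ A.final

/-- The label of a run: the product in `M` of the labels of its transitions. -/
def label (A : WAut M K) (r : List ↥A.Δ) : M := (r.map fun t => t.val.2.1).prod

/-- The weight of a run: the product in `K` of the weights of its transitions. -/
def weight (A : WAut M K) (r : List ↥A.Δ) : K := (r.map fun t => t.val.2.2.1).prod

/-- The semantics `⟦A⟧(m)` of a weighted automaton at `m`: the sum of the weights of the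
accepting runs labelled `m`, when this sum exists (`none` otherwise). -/
noncomputable def sem (R : RatAdd K) (A : WAut M K) (m : M) : Option K :=
  R.sum (fun r : {r : List ↥A.Δ // A.IsAccepting r ∧ A.label r = m} => A.weight r.val)

/-- The ambiguity of a weighted automaton at `m`: the number (in `ℕ ∪ {∞}`) of accepting
runs with label `m`. -/
noncomputable def amb (A : WAut M K) (m : M) : ℕ∞ :=
  {r : List ↥A.Δ | A.IsAccepting r ∧ A.label r = m}.encard

end WAut

open Function

namespace RatAdd

variable {K : Type} [Semiring K] (R : RatAdd K)

theorem isSome_sum_of_finite {I : Type} [Finite I] (f : I → K) : (R.sum f).isSome := by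
  have := Fintype.ofFinite I
  simp [R.ax1 f]

theorem sum_of_subsingleton {I : Type} [Subsingleton I] (i : I) (f : I → K) :
    R.sum f = some (f i) := by
  have := Fintype.ofSubsingleton i
  rw [R.ax1, Fintype.sum_subsingleton _ i]

theorem sum_comp_bijective {I J : Type} [Countable I] [Countable J] {g : I → J}
    (hg : Bijective g) (f : J → K) : R.sum (f ∘ g) = R.sum f := by
  have fiber : ∀ j, R.sum (fun i : {i // g i = j} => (f ∘ g) i) = some (f j) := by
    intro j
    obtain ⟨i, hi⟩ := hg.2 j
    have : Subsingleton {i // g i = j} := ⟨fun a b => Subtype.ext (hg.1 (a.2.trans b.2.symm))⟩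
    rw [R.sum_of_subsingleton (⟨i, hi⟩ : {i // g i = j})]
    simp [hi]
  cases h : R.sum f with
  | some s => exact R.ax4 g _ f fiber s h
  | none =>
    cases h' : R.sum (f ∘ g) with
    | none => rfl
    | some s => simpa [h] using R.ax5 g _ f fiber s h'

theorem sum_sumElim {I J : Type} [Countable I] [Countable J] {f : I → K} {g : J → K} {a b : K}
    (hf : R.sum f = some a) (hg : R.sum g = some b) : R.sum (Sum.elim f g) = some (a + b) := by
  refine R.ax4 Sum.isLeft _ (fun c => bif c then a else b) ?_ _ (by simp [R.ax1])
  rintro (_ | _)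
  · have hbij : Bijective (fun j : J => (⟨.inr j, rfl⟩ : {x : I ⊕ J // x.isLeft = false})) :=
      ⟨fun _ _ h => Sum.inr_injective (congrArg Subtype.val h),
        fun | ⟨.inr j, _⟩ => ⟨j, rfl⟩⟩
    rw [← R.sum_comp_bijective hbij]
    exact hg
  · have hbij : Bijective (fun i : I => (⟨.inl i, rfl⟩ : {x : I ⊕ J // x.isLeft = true})) :=
      ⟨fun _ _ h => Sum.inl_injective (congrArg Subtype.val h),
        fun | ⟨.inl i, _⟩ => ⟨i, rfl⟩⟩
    rw [← R.sum_comp_bijective hbij]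
    exact hf

theorem sum_mul_sum {I J : Type} [Countable I] [Countable J] {f : I → K} {g : J → K} {a b : K}
    (hf : R.sum f = some a) (hg : R.sum g = some b) :
    R.sum (fun x : I × J => f x.1 * g x.2) = some (a * b) := by
  refine R.ax4 Prod.fst _ (fun i => f i * b) (fun i => ?_) _ (R.ax3r f a b hf)
  have hbij : Bijective (fun j : J => (⟨(i, j), rfl⟩ : {x : I × J // x.1 = i})) :=
    ⟨fun _ _ h => congrArg Prod.snd (congrArg Subtype.val h),
      fun ⟨(_, j), h⟩ => ⟨j, by subst h; rfl⟩⟩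
  rw [← R.sum_comp_bijective hbij]
  exact R.ax3l g b (f i) hg

theorem sum_list_prod_of_length {I : Type} [Countable I] {f : I → K} {a : K}
    (hf : R.sum f = some a) (n : ℕ) :
    R.sum (fun l : {l : List I // l.length = n} => (l.1.map f).prod) = some (a ^ n) := by
  induction n with
  | zero =>
    have : Subsingleton {l : List I // l.length = 0} := ⟨fun l l' => Subtype.ext <|
      (List.length_eq_zero_iff.mp l.2).trans (List.length_eq_zero_iff.mp l'.2).symm⟩
    rw [R.sum_of_subsingleton (⟨[], rfl⟩ : {l : List I // l.length = 0})]
    simp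
  | succ n ih =>
    have hbij : Bijective (fun x : I × {l : List I // l.length = n} =>
        (⟨x.1 :: x.2.1, by simp [x.2.2]⟩ : {l : List I // l.length = n + 1})) := by
      refine ⟨fun x y h => ?_, fun ⟨l, hl⟩ => ?_⟩
      · simp only [Subtype.mk.injEq, List.cons.injEq] at h
        exact Prod.ext h.1 (Subtype.ext h.2)
      · obtain ⟨i, l, rfl⟩ := List.exists_cons_of_length_eq_add_one hl
        exact ⟨(i, ⟨l, by simpa using hl⟩), rfl⟩
    rw [← R.sum_comp_bijective hbij, pow_succ']
    exact R.sum_mul_sum hf ih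

theorem isSome_sum_list_prod {I : Type} [Countable I] {f : I → K} {a : K}
    (hf : R.sum f = some a) : (R.sum fun l : List I => (l.map f).prod).isSome := by
  obtain ⟨s, hs⟩ := Option.isSome_iff_exists.mp (R.ax2 a)
  simp [R.ax4 List.length (fun l => (l.map f).prod) _ (R.sum_list_prod_of_length hf) s hs]

theorem isSome_sum_of_finite_fibers {I J : Type} [Countable I] [Finite J] (p : I → J)
    (f : I → K) (h : ∀ j, (R.sum fun i : {i // p i = j} => f i).isSome) :
    (R.sum f).isSome := by
  choose r hr using fun j => Option.isSome_iff_exists.mp (h j)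
  have := Fintype.ofFinite J
  simp [R.ax4 p f r hr _ (R.ax1 r)]

def SummableOn {I : Type} (f : I → K) (X : Set I) : Prop := (R.sum fun i : X => f i).isSome

variable {R} {I : Type} {f : I → K} {X : Set I}

theorem summableOn_of_finite (hX : X.Finite) : R.SummableOn f X :=
  have := hX.to_subtype
  R.isSome_sum_of_finite _

theorem summableOn_of_finite_partition [Countable I] {J : Type} [Finite J] (p : I → J)
    (h : ∀ j, R.SummableOn f {i | i ∈ X ∧ p i = j}) : R.SummableOn f X := by
  refine R.isSome_sum_of_finite_fibers (fun i : X => p i) _ fun j => ?_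
  rw [← h j, ← R.sum_comp_bijective
    (Equiv.subtypeSubtypeEquivSubtypeInter (· ∈ X) (p · = j)).bijective]
  rfl

theorem summableOn_of_bijective [Countable I] {I' : Type} [Countable I'] {g : I' → X}
    (hg : Bijective g) {F : I' → K} (hF : ∀ i, f (g i) = F i) (hs : (R.sum F).isSome) :
    R.SummableOn f X := by
  rwa [SummableOn, ← R.sum_comp_bijective hg, comp_def, funext hF]

end RatAdd

/-- `X = B ⊔ A C`, a disjoint union in which every word of `A C` factors uniquely. -/
structure IsUnambiguousSplit {α : Type} (X B A C : Set (List α)) : Prop where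
  subset : B ⊆ X
  append_mem : ∀ u ∈ A, ∀ v ∈ C, u ++ v ∈ X
  split : ∀ w ∈ X, w ∈ B ∨ ∃ u ∈ A, ∃ v ∈ C, u ++ v = w
  append_notMem : ∀ u ∈ A, ∀ v ∈ C, u ++ v ∉ B
  eq_of_append_eq : ∀ u ∈ A, ∀ v ∈ C, ∀ u' ∈ A, ∀ v' ∈ C, u ++ v = u' ++ v' → u = u'

namespace IsUnambiguousSplit

variable {α : Type} {X B A C : Set (List α)}

theorem bijective_sumElim (h : IsUnambiguousSplit X B A C) :
    Bijective (Sum.elim (fun b : B => (⟨b, h.subset b.2⟩ : X))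
      (fun uv : A × C => ⟨uv.1 ++ uv.2, h.append_mem _ uv.1.2 _ uv.2.2⟩)) := by
  refine ⟨?_, fun ⟨w, hw⟩ => ?_⟩
  · rintro (b | ⟨u, v⟩) (b' | ⟨u', v'⟩) huv <;>
      simp only [Sum.elim_inl, Sum.elim_inr, Subtype.mk.injEq] at huv
    · exact congrArg _ (Subtype.ext huv)
    · exact (h.append_notMem _ u'.2 _ v'.2 (huv ▸ b.2)).elim
    · exact (h.append_notMem _ u.2 _ v.2 (huv ▸ b'.2)).elim
    · have hu : u = u' := Subtype.ext (h.eq_of_append_eq _ u.2 _ v.2 _ u'.2 _ v'.2 huv)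
      subst hu
      rw [Subtype.ext (List.append_cancel_left huv)]
  · rcases h.split w hw with hB | ⟨u, hu, v, hv, rfl⟩
    · exact ⟨.inl ⟨w, hB⟩, rfl⟩
    · exact ⟨.inr (⟨u, hu⟩, ⟨v, hv⟩), rfl⟩

theorem flatten_append_mem (h : IsUnambiguousSplit X B A X) (l : List A) {z : List α}
    (hz : z ∈ B) :
    (l.map Subtype.val).flatten ++ z ∈ X := by
  induction l with
  | nil => exact h.subset hz
  | cons u l ih => simpa using h.append_mem _ u.2 _ ih

/-- Arden's rule, unambiguous version: `X = A* B`. -/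
theorem bijective_flatten_append (h : IsUnambiguousSplit X B A X) (hA : [] ∉ A) :
    Bijective (fun lz : List A × B =>
      (⟨(lz.1.map Subtype.val).flatten ++ lz.2, h.flatten_append_mem lz.1 lz.2.2⟩ : X)) := by
  refine ⟨?_, fun ⟨w, hw⟩ => ?_⟩
  · rintro ⟨l, z⟩ ⟨l', z'⟩ hlz
    simp only [Subtype.mk.injEq] at hlz
    induction l generalizing l' with
    | nil =>
      cases l' with
      | nil => simpa using Subtype.ext hlz
      | cons u' l' =>
        simp only [List.map_nil, List.flatten_nil, List.nil_append, List.map_cons,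
          List.flatten_cons, List.append_assoc] at hlz
        exact (h.append_notMem _ u'.2 _ (h.flatten_append_mem l' z'.2) (hlz ▸ z.2)).elim
    | cons u l ih =>
      cases l' with
      | nil =>
        simp only [List.map_nil, List.flatten_nil, List.nil_append, List.map_cons,
          List.flatten_cons, List.append_assoc] at hlz
        exact (h.append_notMem _ u.2 _ (h.flatten_append_mem l z.2) (hlz ▸ z'.2)).elim
      | cons u' l' =>
        simp only [List.map_cons, List.flatten_cons, List.append_assoc] at hlz
        have hu : u = u' := Subtype.ext <| h.eq_of_append_eq _ u.2 _ (h.flatten_append_mem l z.2)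
          _ u'.2 _ (h.flatten_append_mem l' z'.2) hlz
        subst hu
        simpa using ih l' (List.append_cancel_left hlz)
  · induction hlen : w.length using Nat.strong_induction_on generalizing w with
    | _ n ih =>
      rcases h.split w hw with hB | ⟨u, hu, v, hv, rfl⟩
      · exact ⟨([], ⟨w, hB⟩), rfl⟩
      · have hlt : v.length < n := by
          rw [← hlen, List.length_append]
          have : u ≠ [] := fun h => hA (h ▸ hu)
          have := List.length_pos_of_ne_nil this
          omega
        obtain ⟨⟨l, z⟩, hlz⟩ := ih _ hlt v hv rfl
        refine ⟨(⟨u, hu⟩ :: l, z), ?_⟩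
        simp only [Subtype.mk.injEq] at hlz ⊢
        rw [List.map_cons, List.flatten_cons, List.append_assoc, hlz]

variable [Countable α] {K : Type} [Semiring K] {R : RatAdd K} {wt : α → K}

theorem summableOn (h : IsUnambiguousSplit X B A C)
    (hB : R.SummableOn (fun w => (w.map wt).prod) B)
    (hA : R.SummableOn (fun w => (w.map wt).prod) A)
    (hC : R.SummableOn (fun w => (w.map wt).prod) C) :
    R.SummableOn (fun w => (w.map wt).prod) X := by
  obtain ⟨b, hb⟩ := Option.isSome_iff_exists.mp hB
  obtain ⟨a, ha⟩ := Option.isSome_iff_exists.mp hA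
  obtain ⟨c, hc⟩ := Option.isSome_iff_exists.mp hC
  refine RatAdd.summableOn_of_bijective h.bijective_sumElim ?_
    (Option.isSome_iff_exists.mpr ⟨_, R.sum_sumElim hb (R.sum_mul_sum ha hc)⟩)
  rintro (_ | _) <;> simp

theorem summableOn_of_self (h : IsUnambiguousSplit X B A X) (hnil : [] ∉ A)
    (hB : R.SummableOn (fun w => (w.map wt).prod) B)
    (hA : R.SummableOn (fun w => (w.map wt).prod) A) :
    R.SummableOn (fun w => (w.map wt).prod) X := by
  obtain ⟨b, hb⟩ := Option.isSome_iff_exists.mp hB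
  obtain ⟨a, ha⟩ := Option.isSome_iff_exists.mp hA
  obtain ⟨t, ht⟩ := Option.isSome_iff_exists.mp (R.isSome_sum_list_prod ha)
  refine RatAdd.summableOn_of_bijective (h.bijective_flatten_append hnil) ?_
    (Option.isSome_iff_exists.mpr ⟨_, R.sum_mul_sum ht hb⟩)
  rintro ⟨l, z⟩
  simp [List.map_flatten, List.prod_flatten, Function.comp_def]

end IsUnambiguousSplit

namespace DFA

variable {α σ : Type} (M : DFA α σ)

/-- Nonempty words leading from `p` to `q` whose intermediate states (excluding `p` and `q`)
all lie in `S`. -/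
inductive IsPathWithin (S : Set σ) : σ → σ → List α → Prop
  | single (p : σ) (a : α) : IsPathWithin S p (M.step p a) [a]
  | cons {p q : σ} {a : α} {w : List α} :
      M.step p a ∈ S → IsPathWithin S (M.step p a) q w → IsPathWithin S p q (a :: w)

namespace IsPathWithin

variable {M} {S T : Set σ} {p q x : σ} {u v w : List α}

theorem ne_nil (h : M.IsPathWithin S p q w) : w ≠ [] := by
  cases h <;> simp

theorem evalFrom_eq (h : M.IsPathWithin S p q w) : M.evalFrom p w = q := by
  induction h with
  | single => rfl
  | cons _ _ ih => exact ih

theorem mono (hST : S ⊆ T) (h : M.IsPathWithin S p q w) : M.IsPathWithin T p q w := by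
  induction h with
  | single => exact .single _ _
  | cons hs _ ih => exact .cons (hST hs) ih

theorem append (hu : M.IsPathWithin S p x u) (hx : x ∈ S) (hv : M.IsPathWithin S x q v) :
    M.IsPathWithin S p q (u ++ v) := by
  induction hu with
  | single => exact .cons hx hv
  | cons hs _ ih => exact .cons hs (ih hx hv)

theorem step_mem_of_cons {a : α} (h : M.IsPathWithin S p q (a :: w)) (hw : w ≠ []) :
    M.step p a ∈ S ∧ M.IsPathWithin S (M.step p a) q w := by
  generalize hl : a :: w = l at h
  cases h with
  | single => cases hl; exact absurd rfl hw
  | cons hs h => cases hl; exact ⟨hs, h⟩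

theorem evalFrom_mem_of_append (h : M.IsPathWithin S p q (u ++ v)) (hu : u ≠ []) (hv : v ≠ []) :
    M.evalFrom p u ∈ S := by
  induction u generalizing p with
  | nil => exact absurd rfl hu
  | cons a u ih =>
    obtain ⟨hs, h⟩ := h.step_mem_of_cons (by simp [hv])
    rcases eq_or_ne u [] with rfl | hu'
    · exact hs
    · exact ih h hu'

theorem split_insert (h : M.IsPathWithin (insert x S) p q w) :
    M.IsPathWithin S p q w ∨ ∃ u, M.IsPathWithin S p x u ∧
      ∃ v, M.IsPathWithin (insert x S) x q v ∧ u ++ v = w := by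
  induction h with
  | single => exact .inl (.single _ _)
  | @cons p q a w hs h ih =>
    rcases hs with hx | hs
    · exact .inr ⟨[a], hx ▸ .single p a, w, hx ▸ h, rfl⟩
    · rcases ih with h' | ⟨u, hu, v, hv, rfl⟩
      · exact .inl (.cons hs h')
      · exact .inr ⟨a :: u, .cons hs hu, v, hv, rfl⟩

theorem exists_eq_singleton (h : M.IsPathWithin ∅ p q w) : ∃ a, w = [a] := by
  cases h with
  | single _ a => exact ⟨a, rfl⟩
  | cons hs => exact absurd hs (Set.notMem_empty _)

end IsPathWithin

theorem isPathWithin_univ_evalFrom {w : List α} (hw : w ≠ []) (p : σ) :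
    M.IsPathWithin Set.univ p (M.evalFrom p w) w := by
  induction w generalizing p with
  | nil => exact absurd rfl hw
  | cons a w ih =>
    rcases eq_or_ne w [] with rfl | hw'
    · exact .single p a
    · exact .cons (Set.mem_univ _) (ih hw' _)

theorem isUnambiguousSplit_isPathWithin_insert {S : Set σ} {x : σ} (hx : x ∉ S) (p q : σ) :
    IsUnambiguousSplit {w | M.IsPathWithin (insert x S) p q w} {w | M.IsPathWithin S p q w}
      {w | M.IsPathWithin S p x w} {w | M.IsPathWithin (insert x S) x q w} where
  subset _ h := h.mono (Set.subset_insert x S)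
  append_mem _ hu _ hv := (hu.mono (Set.subset_insert x S)).append (Set.mem_insert x S) hv
  split _ h := h.split_insert
  append_notMem u hu _ hv h := hx (hu.evalFrom_eq ▸ h.evalFrom_mem_of_append hu.ne_nil hv.ne_nil)
  eq_of_append_eq _ hu _ _ _ hu' _ _ h := by
    have no_proper_prefix : ∀ {u a}, M.IsPathWithin S p x u → M.IsPathWithin S p x (u ++ a) →
        a = [] := fun hu hua => by
      by_contra ha
      exact hx (hu.evalFrom_eq ▸ hua.evalFrom_mem_of_append hu.ne_nil ha)
    rcases List.append_eq_append_iff.mp h with ⟨a, rfl, rfl⟩ | ⟨a, rfl, rfl⟩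
    · simp [no_proper_prefix hu hu']
    · simp [no_proper_prefix hu' hu]

end DFA

section Summability

variable {α σ K : Type} [Finite α] [Semiring K] (R : RatAdd K) (wt : α → K)

theorem DFA.summableOn_isPathWithin (M : DFA α σ) {S : Set σ} (hS : S.Finite) (p q : σ) :
    R.SummableOn (fun w => (w.map wt).prod) {w | M.IsPathWithin S p q w} := by
  induction S, hS using Set.Finite.induction_on generalizing p q with
  | empty =>
    refine RatAdd.summableOn_of_finite ((Set.finite_range fun a : α => [a]).subset ?_)
    rintro w hw
    obtain ⟨a, rfl⟩ := DFA.IsPathWithin.exists_eq_singleton hw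
    exact ⟨a, rfl⟩
  | @insert x S hx _ ih =>
    have hloops := M.isUnambiguousSplit_isPathWithin_insert hx x q
    have hx_nil : [] ∉ {w | M.IsPathWithin S x x w} := fun h => h.ne_nil rfl
    exact (M.isUnambiguousSplit_isPathWithin_insert hx p q).summableOn (ih p q) (ih p x)
      (hloops.summableOn_of_self hx_nil (ih x q) (ih x x))

theorem Language.IsRegular.summableOn {L : Language α} (hL : L.IsRegular) :
    R.SummableOn (fun w => (w.map wt).prod) L := by
  obtain ⟨σ, _, M, rfl⟩ := hL
  refine RatAdd.summableOn_of_finite_partition (fun w => (w.isEmpty, M.eval w)) ?_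
  rintro ⟨_ | _, q⟩
  · by_cases hq : q ∈ M.accept
    · convert M.summableOn_isPathWithin R wt Set.finite_univ M.start q using 3
      constructor
      · rintro ⟨-, hw⟩
        simp only [Prod.mk.injEq, List.isEmpty_eq_false_iff] at hw
        exact hw.2 ▸ M.isPathWithin_univ_evalFrom hw.1 M.start
      · intro h
        have heval : M.eval _ = q := h.evalFrom_eq
        exact ⟨show M.eval _ ∈ M.accept from heval ▸ hq, by simp [h.ne_nil, heval]⟩
    · refine RatAdd.summableOn_of_finite (Set.finite_empty.subset ?_)
      rintro w ⟨hw, hwq⟩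
      simp only [Prod.mk.injEq] at hwq
      exact hq (hwq.2 ▸ hw)
  · refine RatAdd.summableOn_of_finite ((Set.finite_singleton []).subset ?_)
    rintro w ⟨-, hw⟩
    simpa using (Prod.mk.inj hw).1

end Summability

namespace WAut

variable {M K : Type} (A : WAut M K)

open Classical in
/-- States: `none` is a dead state, `some none` the state before reading anything, and
`some (some t)` the state after reading a run from an initial state ending with `t`. -/
noncomputable def runDFA : DFA A.Δ (Option (Option A.Δ)) where
  step
    | some none, t => if t.1.1 ∈ A.init then some (some t) else none
    | some (some u), t => if u.1.2.2.2 = t.1.1 then some (some t) else none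
    | none, _ => none
  start := some none
  accept := {s | ∃ t : A.Δ, s = some (some t) ∧ t.1.2.2.2 ∈ A.final}

theorem isRun_cons_cons {u v : A.Δ} {r : List A.Δ} :
    A.IsRun (v :: u :: r) ↔ v.1.2.2.2 = u.1.1 ∧ A.IsRun (u :: r) :=
  List.isChain_cons_cons

theorem runDFA_evalFrom_none (r : List A.Δ) : A.runDFA.evalFrom none r = none := by
  induction r with
  | nil => rfl
  | cons _ _ ih => exact ih

theorem runDFA_evalFrom_eq_some (v t : A.Δ) (r : List A.Δ) :
    A.runDFA.evalFrom (some (some v)) r = some (some t) ↔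
      A.IsRun (v :: r) ∧ (v :: r).getLast (List.cons_ne_nil _ _) = t := by
  induction r generalizing v with
  | nil =>
    simp only [DFA.evalFrom_nil, Option.some.injEq, List.getLast_singleton]
    exact ⟨fun h => ⟨List.isChain_singleton v, h⟩, And.right⟩
  | cons u r ih =>
    rw [DFA.evalFrom_cons, isRun_cons_cons, List.getLast_cons_cons]
    by_cases h : v.1.2.2.2 = u.1.1
    · rw [show A.runDFA.step (some (some v)) u = some (some u) from if_pos h, ih]
      simp [h]
    · rw [show A.runDFA.step (some (some v)) u = none from if_neg h, runDFA_evalFrom_none]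
      simp [h]

theorem mem_runDFA_accepts (r : List A.Δ) : r ∈ A.runDFA.accepts ↔ A.IsAccepting r := by
  change (∃ t : A.Δ, A.runDFA.evalFrom (some none) r = some (some t) ∧
    t.1.2.2.2 ∈ A.final) ↔ _
  cases r with
  | nil => exact ⟨fun ⟨_, ht, _⟩ => (nomatch ht), fun ⟨_, h, _⟩ => absurd rfl h⟩
  | cons u r =>
    rw [DFA.evalFrom_cons]
    by_cases hu : u.1.1 ∈ A.init
    · rw [show A.runDFA.step (some none) u = some (some u) from if_pos hu]
      simp only [runDFA_evalFrom_eq_some]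
      exact ⟨fun ⟨_, ⟨hrun, ht⟩, hf⟩ => ⟨hrun, List.cons_ne_nil _ _, hu, ht ▸ hf⟩,
        fun ⟨hrun, _, _, hf⟩ => ⟨_, ⟨hrun, rfl⟩, hf⟩⟩
    · rw [show A.runDFA.step (some none) u = none from if_neg hu, runDFA_evalFrom_none]
      exact ⟨fun ⟨_, ht, _⟩ => (nomatch ht), fun ⟨_, _, hinit, _⟩ => absurd hinit hu⟩

theorem isRegular_isAccepting : Language.IsRegular {r | A.IsAccepting r} :=
  have := A.finΔ.fintype
  ⟨_, inferInstance, A.runDFA, Set.ext A.mem_runDFA_accepts⟩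

end WAut

/-- Over a pre-rational monoid `M` and a rationally additive semiring `K`, every
`K`-automaton `A` over `M` is valid: for every `m ∈ M`, the sum of the weights of the
accepting runs of `A` labelled by `m` exists in `K`. -/
theorem waut_valid (M K : Type) [Monoid M] [Semiring K] (R : RatAdd K)
    (hM : IsPreRational M) (A : WAut M K) (m : M) :
    (WAut.sem R A m).isSome := by
  have := A.finΔ.to_subtype
  let μ : FreeMonoid A.Δ →* M := FreeMonoid.lift fun t => t.1.2.1
  have hreg := (hM A.Δ A.finΔ.fintype μ m).inf A.isRegular_isAccepting
  have hruns : {r | A.IsAccepting r ∧ A.label r = m} =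
      {w | μ (FreeMonoid.ofList w) = m} ⊓ {r | A.IsAccepting r} := by
    ext r
    change _ ↔ _ ∧ _
    rw [and_comm]
    simp [μ, WAut.label]
  change R.SummableOn (fun r => (r.map fun t => t.1.2.2.1).prod)
    {r | A.IsAccepting r ∧ A.label r = m}
  rw [hruns]
  exact hreg.summableOn R _
end
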